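/- arXiv:2002.07400 — 7 statements merged into one kernel-verified Lean document; each statement's English description precedes it below -/
import Mathlib

section
/- Fix Ψ : {±1/√n}^n → [-1,1]^N and B > 0, and define the hypothesis class H = {x ↦ ⟨Ψ(x), w⟩ : ‖w‖₂ ≤ B}. If k ≤ n/16, then there exists a subset A ⊆ [n] with |A| = k such that the minimal expected hinge loss over H, with respect to the distribution where x is uniform on {±1/√n}^n and y = sign(∏_{i∈A} x_i), is at least 1 − √(2N)·B/2^k. -/
open Finset
open scoped BigOperators Classical

/-!
The hinge loss dominates `1 - y ŷ`, so the loss of `x ↦ ⟨Ψ x, w⟩` against the parity `χ_A` is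
at least `1 - ⟨v_A, w⟩`, where `v_A` collects the Walsh coefficients at `A` of the coordinates of
`Ψ`. By Parseval each coordinate, being bounded by `1`, has total squared Walsh weight at most `1`,
so `∑_{|A| = k} ‖v_A‖² ≤ N` and some `A` of size `k` has `‖v_A‖² ≤ N / C(n, k) ≤ N / 4^k`
(as `n ≥ 5k`). Cauchy–Schwarz then gives `⟨v_A, w⟩ ≤ √N · B / 2^k`.
-/

/-- The point of the hypercube `{±1/√n}^n` corresponding to a sign pattern `s`. -/
noncomputable def pt (n : ℕ) (s : Fin n → Bool) : Fin n → ℝ :=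
  fun j => (if s j then 1 else -1) / Real.sqrt n

/-- The parity function `f_A(x) = sign(∏_{i ∈ A} x_i)`. -/
noncomputable def parity {n : ℕ} (A : Finset (Fin n)) (s : Fin n → Bool) : ℝ :=
  Real.sign (∏ i ∈ A, pt n s i)

noncomputable def boolSign (b : Bool) : ℝ := if b then 1 else -1

lemma one_add_boolSign_mul_boolSign (b c : Bool) :
    1 + boolSign b * boolSign c = if b = c then 2 else 0 := by
  cases b <;> cases c <;> norm_num [boolSign]

section Walsh

variable {ι : Type*}

noncomputable def walsh (A : Finset ι) (s : ι → Bool) : ℝ := ∏ i ∈ A, boolSign (s i)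

lemma walsh_eq_one_or_eq_neg_one (A : Finset ι) (s : ι → Bool) :
    walsh A s = 1 ∨ walsh A s = -1 := by
  induction A using Finset.induction_on with
  | empty => simp [walsh]
  | insert i A hi ih =>
    rw [walsh, prod_insert hi, ← walsh]
    rcases ih with h | h <;> cases s i <;> simp [h, boolSign]

variable [Fintype ι]

lemma sum_walsh_mul_walsh (s t : ι → Bool) :
    ∑ A : Finset ι, walsh A s * walsh A t = if s = t then 2 ^ Fintype.card ι else 0 := by
  simp_rw [walsh, ← prod_mul_distrib, ← powerset_univ, ← prod_one_add,
    one_add_boolSign_mul_boolSign]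
  split_ifs with h
  · simp [h]
  · obtain ⟨i, hi⟩ := Function.ne_iff.mp h
    exact prod_eq_zero (mem_univ i) (if_neg hi)

variable [DecidableEq ι]

lemma sum_sq_sum_walsh_mul (g : (ι → Bool) → ℝ) :
    ∑ A : Finset ι, (∑ s, walsh A s * g s) ^ 2 = 2 ^ Fintype.card ι * ∑ s, g s ^ 2 := by
  calc ∑ A : Finset ι, (∑ s, walsh A s * g s) ^ 2
      = ∑ s, ∑ t, g s * g t * ∑ A : Finset ι, walsh A s * walsh A t := by
        simp_rw [sq, sum_mul_sum, mul_sum]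
        rw [sum_comm]
        refine sum_congr rfl fun s _ => ?_
        rw [sum_comm]
        refine sum_congr rfl fun t _ => sum_congr rfl fun A _ => by ring
    _ = 2 ^ Fintype.card ι * ∑ s, g s ^ 2 := by
        simp_rw [sum_walsh_mul_walsh, mul_ite, mul_zero, sum_ite_eq, mem_univ, if_true, mul_sum]
        exact sum_congr rfl fun s _ => by ring

noncomputable def walshCoeff (A : Finset ι) (g : (ι → Bool) → ℝ) : ℝ :=
  (∑ s, walsh A s * g s) / 2 ^ Fintype.card ι

lemma sum_walshCoeff_sq_le_one {g : (ι → Bool) → ℝ} (hg : ∀ s, |g s| ≤ 1) :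
    ∑ A : Finset ι, walshCoeff A g ^ 2 ≤ 1 := by
  have hg2 : ∑ s, g s ^ 2 ≤ 2 ^ Fintype.card ι := by
    calc ∑ s, g s ^ 2 ≤ ∑ _s : ι → Bool, (1 : ℝ) :=
          sum_le_sum fun s _ => (sq_le_one_iff_abs_le_one _).2 (hg s)
      _ = 2 ^ Fintype.card ι := by simp
  simp_rw [walshCoeff, div_pow, ← sum_div, sum_sq_sum_walsh_mul]
  rw [div_le_one (by positivity), sq]
  exact mul_le_mul_of_nonneg_left hg2 (by positivity)

lemma exists_card_eq_sum_walshCoeff_sq_le {κ : Type*} [Fintype κ] (G : κ → (ι → Bool) → ℝ)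
    (hG : ∀ i s, |G i s| ≤ 1) {k : ℕ} (hk : k ≤ Fintype.card ι) :
    ∃ A : Finset ι, A.card = k ∧
      ∑ i, walshCoeff A (G i) ^ 2 ≤ Fintype.card κ / (Fintype.card ι).choose k := by
  have hchoose : 0 < ((Fintype.card ι).choose k : ℝ) := by exact_mod_cast Nat.choose_pos hk
  have hS : (univ.powersetCard k : Finset (Finset ι)).Nonempty := powersetCard_nonempty.2 (by simpa)
  obtain ⟨A, hA, hle⟩ := exists_le_of_sum_le hS (f := fun A => ∑ i, walshCoeff A (G i) ^ 2)
    (g := fun _ => Fintype.card κ / (Fintype.card ι).choose k) (by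
      rw [sum_const, card_powersetCard, card_univ, nsmul_eq_mul, mul_div_cancel₀ _ hchoose.ne',
        sum_comm]
      calc ∑ i, ∑ A ∈ univ.powersetCard k, walshCoeff A (G i) ^ 2
          ≤ ∑ _i : κ, (1 : ℝ) := sum_le_sum fun i _ =>
            (sum_le_sum_of_subset_of_nonneg (subset_univ _) fun _ _ _ => sq_nonneg _).trans
              (sum_walshCoeff_sq_le_one (hG i))
        _ = Fintype.card κ := by simp)
  exact ⟨A, (mem_powersetCard.1 hA).2, hle⟩

lemma sum_walshCoeff_mul {κ : Type*} [Fintype κ] (A : Finset ι) (G : κ → (ι → Bool) → ℝ)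
    (w : κ → ℝ) :
    ∑ i, walshCoeff A (G i) * w i
      = (1 / 2 ^ Fintype.card ι) * ∑ s, walsh A s * ∑ i, G i s * w i := by
  simp_rw [walshCoeff, mul_sum, sum_div, sum_mul]
  rw [sum_comm]
  exact sum_congr rfl fun s _ => sum_congr rfl fun i _ => by ring

end Walsh

lemma parity_eq_walsh {n : ℕ} (A : Finset (Fin n)) (s : Fin n → Bool) :
    parity A s = walsh A s := by
  rcases A.eq_empty_or_nonempty with rfl | ⟨i, -⟩
  · simp [parity, walsh]
  have hpt : ∏ j ∈ A, pt n s j = walsh A s / Real.sqrt n ^ A.card := by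
    simp only [walsh, pt, boolSign, prod_div_distrib, prod_const]
  have hpos : 0 < Real.sqrt n ^ A.card := pow_pos (Real.sqrt_pos.2 (by exact_mod_cast i.pos)) _
  rw [parity, hpt]
  rcases walsh_eq_one_or_eq_neg_one A s with h | h <;> rw [h]
  · exact Real.sign_of_pos (by positivity)
  · exact Real.sign_of_neg (by rw [neg_div]; exact neg_neg_iff_pos.2 (by positivity))

lemma four_pow_le_choose {n k : ℕ} (h : 5 * k ≤ n) : 4 ^ k ≤ n.choose k := by
  induction k with
  | zero => simp
  | succ k ih =>
    refine Nat.le_of_mul_le_mul_right ?_ k.succ_pos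
    calc 4 ^ (k + 1) * (k + 1) = 4 ^ k * (4 * (k + 1)) := by ring
      _ ≤ n.choose k * (n - k) := Nat.mul_le_mul (ih (by omega)) (by omega)
      _ = n.choose (k + 1) * (k + 1) := (Nat.choose_succ_right_eq n k).symm

lemma sqrt_div_choose_le {n k : ℕ} (h : 5 * k ≤ n) (x : ℝ) :
    Real.sqrt (x / n.choose k) ≤ Real.sqrt x / 2 ^ k := by
  have h4 : ((2 : ℝ) ^ k) ^ 2 ≤ n.choose k :=
    calc ((2 : ℝ) ^ k) ^ 2 = 4 ^ k := by rw [← pow_mul, mul_comm, pow_mul]; norm_num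
      _ ≤ n.choose k := by exact_mod_cast four_pow_le_choose h
  rw [Real.sqrt_div' _ (Nat.cast_nonneg _)]
  exact div_le_div_of_nonneg_left (Real.sqrt_nonneg _) (by positivity)
    ((Real.le_sqrt (by positivity) (Nat.cast_nonneg _)).2 h4)

lemma one_sub_mean_le_mean_hinge {α : Type*} [Fintype α] [Nonempty α] (z : α → ℝ) :
    1 - (1 / Fintype.card α) * ∑ a, z a ≤ (1 / Fintype.card α) * ∑ a, max (1 - z a) 0 := by
  have hcard : (0 : ℝ) < Fintype.card α := by exact_mod_cast Fintype.card_pos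
  calc 1 - (1 / Fintype.card α) * ∑ a, z a = (1 / Fintype.card α) * ∑ a, (1 - z a) := by
        rw [sum_sub_distrib, sum_const, card_univ, nsmul_eq_mul, mul_sub, mul_one, one_div,
          inv_mul_cancel₀ hcard.ne']
    _ ≤ _ := mul_le_mul_of_nonneg_left (sum_le_sum fun a _ => le_max_left _ _) (by positivity)

theorem stmt_3_general (n N k : ℕ) (hk : 16 * k ≤ n) (B : ℝ)
    (Ψ : (Fin n → ℝ) → Fin N → ℝ) (hΨ : ∀ x i, Ψ x i ∈ Set.Icc (-1 : ℝ) 1) :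
    ∃ A : Finset (Fin n), A.card = k ∧
      ∀ w : Fin N → ℝ, Real.sqrt (∑ i, (w i) ^ 2) ≤ B →
        1 - Real.sqrt (2 * N) * B / 2 ^ k ≤
          (1 / 2 ^ n : ℝ) * ∑ s : Fin n → Bool,
            max (1 - parity A s * ∑ i, Ψ (pt n s) i * w i) 0 := by
  obtain ⟨A, hA, hcoeff⟩ := exists_card_eq_sum_walshCoeff_sq_le (fun i s => Ψ (pt n s) i)
    (fun i s => abs_le.2 (hΨ _ i)) (k := k) (by rw [Fintype.card_fin]; omega)
  refine ⟨A, hA, fun w hw => ?_⟩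
  have hcorr : ∑ i, walshCoeff A (fun s => Ψ (pt n s) i) * w i ≤ Real.sqrt (2 * N) * B / 2 ^ k :=
    calc _ ≤ Real.sqrt (∑ i, walshCoeff A (fun s => Ψ (pt n s) i) ^ 2)
            * Real.sqrt (∑ i, w i ^ 2) := Real.sum_mul_le_sqrt_mul_sqrt _ _ _
      _ ≤ Real.sqrt (2 * N) / 2 ^ k * B := by
          refine mul_le_mul ?_ hw (Real.sqrt_nonneg _) (by positivity)
          calc _ ≤ Real.sqrt (N / n.choose k) := by simpa using Real.sqrt_le_sqrt hcoeff
            _ ≤ Real.sqrt N / 2 ^ k := sqrt_div_choose_le (by omega) _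
            _ ≤ _ := by gcongr; linarith [N.cast_nonneg (α := ℝ)]
      _ = _ := by ring
  have hmean := one_sub_mean_le_mean_hinge fun s : Fin n → Bool =>
    parity A s * ∑ i, Ψ (pt n s) i * w i
  rw [sum_walshCoeff_mul] at hcorr
  simp only [parity_eq_walsh, Fintype.card_fun, Fintype.card_bool, Fintype.card_fin,
    Nat.cast_pow, Nat.cast_ofNat] at hmean hcorr ⊢
  linarith

/-- If `k ≤ n/16`, there is a size-`k` subset `A` such that every linear classifier
`x ↦ ⟨Ψ(x), w⟩` with `‖w‖₂ ≤ B` has expected hinge loss at least `1 - √(2N)·B/2^k` on the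
distribution with `x` uniform on `{±1/√n}^n` and `y = f_A(x)`. -/
theorem stmt_3 (n N k : ℕ) (hn : 0 < n) (hk : 16 * k ≤ n) (B : ℝ) (hB : 0 ≤ B)
    (Ψ : (Fin n → ℝ) → Fin N → ℝ) (hΨ : ∀ x i, Ψ x i ∈ Set.Icc (-1 : ℝ) 1) :
    ∃ A : Finset (Fin n), A.card = k ∧
      ∀ w : Fin N → ℝ, Real.sqrt (∑ i, (w i) ^ 2) ≤ B →
        1 - Real.sqrt (2 * N) * B / 2 ^ k ≤
          (1 / 2 ^ n : ℝ) * ∑ s : Fin n → Bool,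
            max (1 - parity A s * ∑ i, Ψ (pt n s) i * w i) 0 :=
  stmt_3_general n N k hk B Ψ hΨ
end

section
/- Let k, n be odd with k ≤ n, let A = [k], and let f(x) = sign(∏_{i=1}^k x_i). Let D be the distribution on {±1/√n}^n where coordinates outside A are i.i.d. uniform on {±1/√n} and the coordinates in A are all equal to 1/√n with probability 1/2 and all equal to −1/√n with probability 1/2. Fix w ∈ {−1,0,1}^n with ∑_{i=1}^k w_i = 0 and b ∈ ℝ. Then for every j ∉ A, E_{x∼D}[x_j · f(x) · 1{⟨w,x⟩ + b > 0}] = 0, and also E_{x∼D}[f(x) · 1{⟨w,x⟩ + b > 0}] = 0. -/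
open Finset
open scoped BigOperators Classical

/-!
Flipping the common sign `ε` of the coordinates in `A = [k]` leaves every coordinate outside `A`
unchanged, and since `∑_{i ∈ A} w_i = 0` it also leaves `⟨w, x⟩` unchanged; as `k` is odd it
flips `f(x)`. So the summands for `ε = true` and `ε = false` cancel pairwise.
-/

/-- A point of `{±1/√n}^n` sampled from `D_A^{(2)}` with `A = [k]`: the first `k`
coordinates are all `ε/√n`, the rest are given by the sign pattern `s`. -/
noncomputable def xA (n k : ℕ) (ε : Bool) (s : Fin n → Bool) : Fin n → ℝ :=
  fun j => (if (j : ℕ) < k then (if ε then 1 else -1) else (if s j then 1 else -1)) / Real.sqrt n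

lemma Fintype.sum_bool_sum_eq_zero {ι M : Type*} [Fintype ι] [AddCommGroup M]
    (g : Bool → ι → M) (h : ∀ s, g false s = -g true s) : ∑ ε, ∑ s, g ε s = 0 := by
  simp [h]

section xA

variable {n k : ℕ}

lemma xA_of_lt (ε : Bool) (s : Fin n → Bool) {i : Fin n} (hi : (i : ℕ) < k) :
    xA n k ε s i = (if ε then 1 else -1) / Real.sqrt n := by
  simp [xA, hi]

lemma xA_of_not_lt (ε ε' : Bool) (s : Fin n → Bool) {i : Fin n} (hi : ¬ (i : ℕ) < k) :
    xA n k ε s i = xA n k ε' s i := by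
  simp [xA, hi]

lemma sign_prod_xA (hk : Odd k) (hkn : k ≤ n) (ε : Bool) (s : Fin n → Bool) :
    Real.sign (∏ i ∈ univ.filter (fun i : Fin n => (i : ℕ) < k), xA n k ε s i) =
      if ε then 1 else -1 := by
  have hn : (0 : ℝ) < Real.sqrt n := Real.sqrt_pos.mpr (by exact_mod_cast hk.pos.trans_le hkn)
  rw [prod_congr rfl fun i hi => xA_of_lt ε s (mem_filter.mp hi).2, prod_const,
    Fin.card_filter_val_lt, min_eq_right hkn]
  cases ε
  · simp [neg_div, hk.neg_pow, Real.sign_of_neg, hn]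
  · simp [Real.sign_of_pos, hn]

lemma inner_xA_eq_of_sum_eq_zero {w : Fin n → ℝ}
    (hw0 : ∑ i ∈ univ.filter (fun i : Fin n => (i : ℕ) < k), w i = 0)
    (ε ε' : Bool) (s : Fin n → Bool) :
    ∑ i, w i * xA n k ε s i = ∑ i, w i * xA n k ε' s i := by
  have inner_eq (ε : Bool) : ∑ i, w i * xA n k ε s i =
      ∑ i ∈ univ.filter (fun i : Fin n => ¬ (i : ℕ) < k), w i * xA n k ε s i := by
    rw [← sum_filter_add_sum_filter_not univ (fun i : Fin n => (i : ℕ) < k),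
      sum_congr rfl fun i hi => by rw [xA_of_lt ε s (mem_filter.mp hi).2], ← sum_mul, hw0,
      zero_mul, zero_add]
  rw [inner_eq, inner_eq]
  exact sum_congr rfl fun i hi => by rw [xA_of_not_lt ε ε' s (mem_filter.mp hi).2]

end xA

theorem stmt_4_general (n k : ℕ) (hkodd : Odd k) (hkn : k ≤ n)
    (w : Fin n → ℝ)
    (hw0 : ∑ i ∈ Finset.univ.filter (fun i : Fin n => (i : ℕ) < k), w i = 0)
    (b : ℝ) :
    (∀ j : Fin n, ¬ (j : ℕ) < k →
      (1 / (2 * 2 ^ n) : ℝ) * ∑ ε : Bool, ∑ s : Fin n → Bool,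
        xA n k ε s j *
          Real.sign (∏ i ∈ Finset.univ.filter (fun i : Fin n => (i : ℕ) < k), xA n k ε s i) *
          (if 0 < (∑ i, w i * xA n k ε s i) + b then 1 else 0) = 0) ∧
    ((1 / (2 * 2 ^ n) : ℝ) * ∑ ε : Bool, ∑ s : Fin n → Bool,
        Real.sign (∏ i ∈ Finset.univ.filter (fun i : Fin n => (i : ℕ) < k), xA n k ε s i) *
          (if 0 < (∑ i, w i * xA n k ε s i) + b then 1 else 0) = 0) := by
  refine ⟨fun j hj => ?_, ?_⟩ <;> rw [Fintype.sum_bool_sum_eq_zero, mul_zero] <;> intro s <;>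
    simp only [sign_prod_xA hkodd hkn, inner_xA_eq_of_sum_eq_zero hw0 false true s,
      Bool.false_eq_true, ↓reduceIte]
  · rw [xA_of_not_lt false true s hj]
    ring
  · ring

/-- For odd `k, n`, `A = [k]`, the biased distribution `D_A^{(2)}`, and `w ∈ {-1,0,1}^n`
with `∑_{i ∈ A} w_i = 0`: the correlations `E[x_j f(x) 1{⟨w,x⟩+b>0}]` for `j ∉ A` and
`E[f(x) 1{⟨w,x⟩+b>0}]` both vanish. -/
theorem stmt_4 (n k : ℕ) (hn : Odd n) (hkodd : Odd k) (hkn : k ≤ n)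
    (w : Fin n → ℝ) (hw : ∀ i, w i = -1 ∨ w i = 0 ∨ w i = 1)
    (hw0 : ∑ i ∈ Finset.univ.filter (fun i : Fin n => (i : ℕ) < k), w i = 0)
    (b : ℝ) :
    (∀ j : Fin n, ¬ (j : ℕ) < k →
      (1 / (2 * 2 ^ n) : ℝ) * ∑ ε : Bool, ∑ s : Fin n → Bool,
        xA n k ε s j *
          Real.sign (∏ i ∈ Finset.univ.filter (fun i : Fin n => (i : ℕ) < k), xA n k ε s i) *
          (if 0 < (∑ i, w i * xA n k ε s i) + b then 1 else 0) = 0) ∧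
    ((1 / (2 * 2 ^ n) : ℝ) * ∑ ε : Bool, ∑ s : Fin n → Bool,
        Real.sign (∏ i ∈ Finset.univ.filter (fun i : Fin n => (i : ℕ) < k), xA n k ε s i) *
          (if 0 < (∑ i, w i * xA n k ε s i) + b then 1 else 0) = 0) :=
  stmt_4_general n k hkodd hkn w hw0 b
end

section
/- Let S = ∑_{j∈J} w_j x_j where w_j ∈ {−1,1} and x_j are i.i.d. uniform on {±1/√n}. Then for every open interval I ⊆ ℝ of length 1/√n, P(S ∈ I) ≤ B/√|J| for a universal constant B, and consequently P(S + b ∈ (−k/√n, k/√n] ∪ [6 − k/√n, 6)) ≤ B(3k+2)/√|J| for any b ∈ ℝ and positive integer k. -/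
/-!
Write the signed sum as `(2t - m)/√n`, where `t` counts the terms equal to `+1/√n`; the
outcome `x` is determined by the set of those terms. Two values of the sum in one open interval
of length `2/√n` therefore have the same `t`, so such an interval carries at most
`C(m, t) ≤ C(m, ⌊m/2⌋) ≤ √2 · 2^m / √m` outcomes, the last bound coming from
`C(2n, n)² (n + 1) ≤ 16^n` (induction on `n`). The set in the second claim is covered by `3k`
open intervals of length `2/√n`. Both claims hold with `B = √2`.
-/

open Finset
open scoped Classical

namespace Nat

theorem centralBinom_sq_mul_succ_le (n : ℕ) : centralBinom n ^ 2 * (n + 1) ≤ 16 ^ n := by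
  induction n with
  | zero => simp
  | succ n ih =>
    have hrec := succ_mul_centralBinom_succ n
    have hpoly : (2 * n + 1) ^ 2 * (n + 2) ≤ 4 * (n + 1) ^ 3 := by nlinarith
    have hmul :
        (n + 1) ^ 2 * (centralBinom (n + 1) ^ 2 * (n + 2)) ≤ (n + 1) ^ 2 * 16 ^ (n + 1) :=
      calc (n + 1) ^ 2 * (centralBinom (n + 1) ^ 2 * (n + 2))
          = ((n + 1) * centralBinom (n + 1)) ^ 2 * (n + 2) := by ring
        _ = 4 * ((2 * n + 1) ^ 2 * (n + 2)) * centralBinom n ^ 2 := by rw [hrec]; ring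
        _ ≤ 4 * (4 * (n + 1) ^ 3) * centralBinom n ^ 2 := by gcongr
        _ = 16 * (n + 1) ^ 2 * (centralBinom n ^ 2 * (n + 1)) := by ring
        _ ≤ 16 * (n + 1) ^ 2 * 16 ^ n := by gcongr
        _ = (n + 1) ^ 2 * 16 ^ (n + 1) := by ring
    exact Nat.le_of_mul_le_mul_left hmul (by positivity)

theorem two_mul_choose_two_mul_add_one (n : ℕ) :
    2 * (2 * n + 1).choose n = centralBinom (n + 1) := by
  rw [centralBinom_eq_two_mul_choose, show 2 * (n + 1) = 2 * n + 1 + 1 by ring,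
    choose_succ_succ, choose_symm_half]
  ring

theorem choose_sq_mul_le_two_mul_four_pow (m k : ℕ) : m.choose k ^ 2 * m ≤ 2 * 4 ^ m := by
  refine le_trans (Nat.mul_le_mul_right _ (Nat.pow_le_pow_left (choose_le_middle k m) 2)) ?_
  obtain ⟨n, rfl | rfl⟩ := even_or_odd' m
  · rw [show 2 * n / 2 = n by omega, ← centralBinom_eq_two_mul_choose]
    have := centralBinom_sq_mul_succ_le n
    calc centralBinom n ^ 2 * (2 * n) ≤ 2 * (centralBinom n ^ 2 * (n + 1)) := by nlinarith
      _ ≤ 2 * 16 ^ n := by omega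
      _ = 2 * 4 ^ (2 * n) := by rw [pow_mul]; norm_num
  · rw [show (2 * n + 1) / 2 = n by omega]
    have hcentral := centralBinom_sq_mul_succ_le (n + 1)
    have hchoose := two_mul_choose_two_mul_add_one n
    suffices 4 * ((2 * n + 1).choose n ^ 2 * (2 * n + 1)) ≤ 4 * (2 * 4 ^ (2 * n + 1)) by omega
    calc 4 * ((2 * n + 1).choose n ^ 2 * (2 * n + 1))
        = centralBinom (n + 1) ^ 2 * (2 * n + 1) := by rw [← hchoose]; ring
      _ ≤ centralBinom (n + 1) ^ 2 * (2 * (n + 1 + 1)) := by gcongr; omega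
      _ ≤ 2 * 16 ^ (n + 1) := by nlinarith
      _ = 4 * (2 * 4 ^ (2 * n + 1)) := by rw [pow_succ, pow_succ, pow_mul]; norm_num; ring

end Nat

theorem choose_div_two_pow_le_sqrt_two_div_sqrt (m k : ℕ) (hm : 0 < m) :
    (m.choose k : ℝ) / 2 ^ m ≤ √2 / √m := by
  have hsq : ((m.choose k : ℝ) * √m) ^ 2 ≤ (√2 * 2 ^ m) ^ 2 := by
    rw [mul_pow, mul_pow, Real.sq_sqrt (by positivity), Real.sq_sqrt (by positivity), ← pow_mul,
      mul_comm m 2, pow_mul]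
    exact_mod_cast Nat.choose_sq_mul_le_two_mul_four_pow m k
  have hsm : 0 < √(m : ℝ) := by positivity
  rw [div_le_div_iff₀ (by positivity) hsm]
  exact (pow_le_pow_iff_left₀ (by positivity) (by positivity) two_ne_zero).mp hsq

section SignSums

variable {ι : Type*} {w : ι → ℝ}

theorem mul_sign_eq_one_or_eq_neg_one (hw : ∀ j, w j = 1 ∨ w j = -1) (x : ι → Bool)
    (j : ι) :
    w j * (if x j then 1 else -1) = 1 ∨ w j * (if x j then 1 else -1) = -1 := by
  rcases hw j with h | h <;> cases x j <;> simp [h]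

variable [Fintype ι]

theorem sum_eq_two_mul_card_filter_eq_one_sub_card {t : ι → ℝ}
    (ht : ∀ j, t j = 1 ∨ t j = -1) :
    ∑ j, t j = 2 * #{j | t j = 1} - Fintype.card ι := by
  have hterm : ∀ j, t j = 2 * (if t j = 1 then 1 else 0) - 1 := fun j => by
    rcases ht j with h | h <;> simp [h] <;> norm_num
  rw [Finset.sum_congr rfl fun j _ => hterm j, Finset.sum_sub_distrib, ← Finset.mul_sum,
    Finset.sum_boole, Finset.sum_const, Finset.card_univ, nsmul_one]

theorem injective_filter_mul_sign_eq_one (hw : ∀ j, w j = 1 ∨ w j = -1) :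
    Function.Injective fun x : ι → Bool =>
      ({j | w j * (if x j then 1 else -1) = 1} : Finset ι) := by
  intro x y hxy
  funext j
  have hj := Finset.ext_iff.mp hxy j
  simp only [Finset.mem_filter, Finset.mem_univ, true_and] at hj
  rcases hw j with h | h <;> cases hx : x j <;> cases hy : y j <;> simp_all <;> norm_num at hj

variable [DecidableEq ι]

theorem card_filter_sum_mul_sign_mem_Ioo_le (hw : ∀ j, w j = 1 ∨ w j = -1) (u : ℝ) :
    #{x : ι → Bool | ∑ j, w j * (if x j then 1 else -1) ∈ Set.Ioo u (u + 2)} ≤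
      (Fintype.card ι).choose (Fintype.card ι / 2) := by
  set T : Finset (ι → Bool) := {x | ∑ j, w j * (if x j then 1 else -1) ∈ Set.Ioo u (u + 2)}
  set P : (ι → Bool) → Finset ι := fun x => {j | w j * (if x j then 1 else -1) = 1}
  have hsum : ∀ x, ∑ j, w j * (if x j then 1 else -1) = 2 * #(P x) - Fintype.card ι :=
    fun x => sum_eq_two_mul_card_filter_eq_one_sub_card (mul_sign_eq_one_or_eq_neg_one hw x)
  obtain hT | ⟨x₀, hx₀⟩ := T.eq_empty_or_nonempty
  · simp [hT]
  -- sums in an open interval of length 2 differ by less than 2, so have equally many `+1` terms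
  have hmaps : Set.MapsTo P T (powersetCard #(P x₀) (univ : Finset ι)) := by
    intro x hx
    simp only [T, coe_filter, mem_filter, mem_univ, true_and, Set.mem_ofPred_eq, Set.mem_Ioo, hsum]
      at hx hx₀
    have hlt : |(#(P x) : ℝ) - #(P x₀)| < 1 :=
      abs_sub_lt_iff.mpr ⟨by linarith, by linarith⟩
    have heq : #(P x) = #(P x₀) := by
      have : |(#(P x) : ℤ) - #(P x₀)| < 1 := by exact_mod_cast hlt
      have := Int.abs_lt_one_iff.mp this
      omega
    simp [heq]
  calc #T ≤ #(powersetCard #(P x₀) (univ : Finset ι)) :=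
        card_le_card_of_injOn P hmaps (injective_filter_mul_sign_eq_one hw).injOn
    _ ≤ _ := by rw [card_powersetCard, card_univ]; exact Nat.choose_le_middle _ _

theorem card_filter_sum_mul_sign_div_mem_Ioo_le (hw : ∀ j, w j = 1 ∨ w j = -1) {s : ℝ}
    (hs : 0 < s) (u : ℝ) :
    #{x : ι → Bool | ∑ j, w j * ((if x j then 1 else -1) / s) ∈ Set.Ioo u (u + 2 / s)} ≤
      (Fintype.card ι).choose (Fintype.card ι / 2) := by
  refine le_of_eq_of_le (congrArg card (filter_congr fun x _ => ?_))
    (card_filter_sum_mul_sign_mem_Ioo_le hw (u * s))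
  simp only [← mul_div_assoc, ← sum_div, Set.mem_Ioo, lt_div_iff₀ hs, div_lt_iff₀ hs,
    add_mul, div_mul_cancel₀ _ hs.ne']

end SignSums

namespace Set

variable {c : ℝ}

theorem Ioc_subset_biUnion_Ioo (hc : 0 < c) {u v : ℝ} {K : ℕ} (hv : v ≤ u + K * c) :
    Ioc u v ⊆ ⋃ i ∈ Finset.range K, Ioo (u + i * c) (u + i * c + 2 * c) := by
  intro p ⟨hup, hpv⟩
  set q := (p - u) / c
  have hq : 0 < q := div_pos (by linarith) hc
  have hqK : q ≤ K := (div_le_iff₀ hc).mpr (by linarith)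
  have hceil : 0 < ⌈q⌉₊ := Nat.ceil_pos.mpr hq
  -- `i = ⌈q⌉₊ - 1` is the index with `i * c < p - u ≤ (i + 1) * c`
  refine mem_iUnion₂.mpr ⟨⌈q⌉₊ - 1, Finset.mem_range.mpr ?_, ?_⟩
  · have := Nat.ceil_le.mpr hqK; omega
  · have hcast : ((⌈q⌉₊ - 1 : ℕ) : ℝ) = ⌈q⌉₊ - 1 := by
      rw [Nat.cast_sub hceil, Nat.cast_one]
    have h1 : (⌈q⌉₊ : ℝ) < q + 1 := Nat.ceil_lt_add_one hq.le
    have h2 : q ≤ ⌈q⌉₊ := Nat.le_ceil q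
    have hpq : p = u + q * c := by simp only [q]; field_simp; ring
    rw [hcast, hpq]
    constructor <;> nlinarith

theorem Ico_subset_biUnion_Ioo (hc : 0 < c) {u v : ℝ} {K : ℕ} (hv : v ≤ u + K * c) :
    Ico u v ⊆ ⋃ i ∈ Finset.range K, Ioo (v - (i + 2) * c) (v - (i + 2) * c + 2 * c) := by
  intro p ⟨hup, hpv⟩
  obtain ⟨i, hi, hlo, hhi⟩ := mem_iUnion₂.mp <| Ioc_subset_biUnion_Ioo hc (u := -v) (v := -u)
    (by linarith) ⟨neg_lt_neg hpv, neg_le_neg hup⟩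
  exact mem_iUnion₂.mpr ⟨i, hi, by linarith, by linarith⟩

end Set

theorem card_filter_mem_le_card_mul {α β κ : Type*} (s : Finset α) (f : α → β) {U : Set β}
    {I : Finset κ} {V : κ → Set β} [DecidablePred (f · ∈ U)]
    [∀ i, DecidablePred (f · ∈ V i)] (hUV : U ⊆ ⋃ i ∈ I, V i) {M : ℕ}
    (hV : ∀ i ∈ I, #{x ∈ s | f x ∈ V i} ≤ M) :
    #{x ∈ s | f x ∈ U} ≤ #I * M := by
  calc #{x ∈ s | f x ∈ U} ≤ #(I.biUnion fun i => {x ∈ s | f x ∈ V i}) := by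
        refine card_le_card fun x hx => ?_
        obtain ⟨hxs, hxU⟩ := mem_filter.mp hx
        obtain ⟨i, hi, hxi⟩ := Set.mem_iUnion₂.mp (hUV hxU)
        exact mem_biUnion.mpr ⟨i, hi, mem_filter.mpr ⟨hxs, hxi⟩⟩
    _ ≤ ∑ i ∈ I, #{x ∈ s | f x ∈ V i} := card_biUnion_le
    _ ≤ #I * M := by simpa using sum_le_card_nsmul I _ M hV

section Covering

variable {α : Type*} {s : Finset α} {f : α → ℝ} {c : ℝ} {M : ℕ}

theorem card_filter_mem_Ioc_le (hc : 0 < c)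
    (hM : ∀ p, #{x ∈ s | f x ∈ Set.Ioo p (p + 2 * c)} ≤ M) {u v : ℝ} {K : ℕ}
    (hv : v ≤ u + K * c) :
    #{x ∈ s | f x ∈ Set.Ioc u v} ≤ K * M := by
  simpa using card_filter_mem_le_card_mul s f (Set.Ioc_subset_biUnion_Ioo hc hv) fun _ _ => hM _

theorem card_filter_mem_Ico_le (hc : 0 < c)
    (hM : ∀ p, #{x ∈ s | f x ∈ Set.Ioo p (p + 2 * c)} ≤ M) {u v : ℝ} {K : ℕ}
    (hv : v ≤ u + K * c) :
    #{x ∈ s | f x ∈ Set.Ico u v} ≤ K * M := by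
  simpa using card_filter_mem_le_card_mul s f (Set.Ico_subset_biUnion_Ioo hc hv) fun _ _ => hM _

end Covering

/-- Littlewood–Offord anti-concentration: for `S = ∑_{j∈J} w_j x_j` with `w_j ∈ {±1}` and
`x_j` i.i.d. uniform on `{±1/√n}`, any open interval of length `1/√n` has probability at most
`B/√|J|`, and the union of boundary intervals has probability at most `B(3k+2)/√|J|`. -/
theorem stmt_6 :
    ∃ B : ℝ, 0 < B ∧
      ∀ (n m k : ℕ), 0 < n → 0 < m → 0 < k →
        ∀ (w : Fin m → ℝ), (∀ j, w j = 1 ∨ w j = -1) →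
          ∀ (a b : ℝ),
            (((Finset.univ.filter (fun x : Fin m → Bool =>
                (∑ j, w j * ((if x j then 1 else -1) / Real.sqrt n)) ∈
                  Set.Ioo a (a + 1 / Real.sqrt n))).card : ℝ) / 2 ^ m
              ≤ B / Real.sqrt m) ∧
            (((Finset.univ.filter (fun x : Fin m → Bool =>
                (∑ j, w j * ((if x j then 1 else -1) / Real.sqrt n)) + b ∈
                  Set.Ioc (-(k / Real.sqrt n)) (k / Real.sqrt n) ∪
                    Set.Ico (6 - k / Real.sqrt n) 6)).card : ℝ) / 2 ^ m
              ≤ B * (3 * k + 2) / Real.sqrt m) := by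
  refine ⟨√2, by positivity, fun n m k hn hm _ w hw a b => ?_⟩
  set S : (Fin m → Bool) → ℝ := fun x => ∑ j, w j * ((if x j then 1 else -1) / √n)
  set M := m.choose (m / 2)
  have hsn : 0 < √(n : ℝ) := Real.sqrt_pos.mpr (Nat.cast_pos.mpr hn)
  have hc : 0 < 1 / √(n : ℝ) := one_div_pos.mpr hsn
  have hM : (M : ℝ) / 2 ^ m ≤ √2 / √m := choose_div_two_pow_le_sqrt_two_div_sqrt m _ hm
  have hS : ∀ u, #{x | S x ∈ Set.Ioo u (u + 2 / √n)} ≤ M := by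
    simpa using card_filter_sum_mul_sign_div_mem_Ioo_le hw hsn
  have hSb : ∀ p, #{x | S x + b ∈ Set.Ioo p (p + 2 * (1 / √n))} ≤ M := fun p =>
    le_of_eq_of_le (congrArg card (filter_congr fun x _ => by
      rw [Set.add_mem_Ioo_iff_left, add_sub_right_comm, mul_one_div])) (hS (p - b))
  constructor
  · calc (#{x | S x ∈ Set.Ioo a (a + 1 / √n)} : ℝ) / 2 ^ m ≤ M / 2 ^ m := by
          gcongr
          refine (card_le_card (monotone_filter_right _ fun x _ hx => ?_)).trans (hS a)
          exact ⟨hx.1, hx.2.trans_le (by gcongr; norm_num)⟩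
      _ ≤ √2 / √m := hM
  · have hcount : #{x | S x + b ∈ Set.Ioc (-(k / √n)) (k / √n) ∪ Set.Ico (6 - k / √n) 6}
        ≤ 2 * k * M + k * M := by
      simp only [Set.mem_union, filter_or]
      refine (card_union_le _ _).trans (add_le_add ?_ ?_)
      · exact card_filter_mem_Ioc_le hc hSb (by push_cast; linarith [mul_one_div (k : ℝ) √n])
      · exact card_filter_mem_Ico_le hc hSb (by linarith [mul_one_div (k : ℝ) √n])
    calc _ ≤ ((2 * k * M + k * M : ℕ) : ℝ) / 2 ^ m := by gcongr
      _ = 3 * k * (M / 2 ^ m) := by push_cast; ring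
      _ ≤ (3 * k + 2) * (√2 / √m) := by gcongr; linarith
      _ = √2 * (3 * k + 2) / √m := by ring
end

section
/- Let A ⊆ [n], let h : {±1/√n}^n → {±1} be a function depending only on the coordinates in A, let w ∈ {−1,0,1}^n, b ∈ ℝ, and let D be a product-form distribution under which the coordinates in A and the coordinates outside A are independent, with the coordinates outside A i.i.d. uniform on {±1/√n}. Set J = {j ∉ A : w_j ≠ 0} and φ(w,b) = P(k/√n < ∑_{j∈J} w_j x_j + b < 6 − k/√n), assuming ∑_{j∈A} |w_j| ≤ k. Then |E[h(x)·σ'(⟨w,x⟩ + b)] − E[h(x)]·φ(w,b)| ≤ Ck/√|J| for a universal constant C, where σ'(z) = 1{0 < z < 6} is the derivative of the ReLU6 activation. -/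
open Finset
open scoped BigOperators Classical

/-- The derivative of the ReLU6 activation: `σ'(z) = 1{0 < z < 6}`. -/
noncomputable def sigma6' (z : ℝ) : ℝ := if 0 < z ∧ z < 6 then 1 else 0

/-!
Write `⟨w, x⟩ + b = a + X` with `a = ∑_{i ∈ A} w_i x_i`, a function of the `A`-coordinates with
`|a| ≤ k/√n`, and `X = ∑_{j ∈ J} w_j x_j + b`, independent of them. Then `σ'(a + X)` and
`1{k/√n < X < 6 - k/√n}` can only differ when `X` lies within `k/√n` of `0` or of `6`, so for each
value of the `A`-coordinates the two expectations over the remaining coordinates differ by at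
most the probability of these two windows. Since `√n (X - b) = |J| - 2N` with `N` binomially
distributed with parameters `(|J|, 1/2)`, each window contains at most `k + 1` values of `N`,
each taken with probability at most `C(|J|, ⌊|J|/2⌋) / 2^|J| ≤ 1/√|J|`. Averaging over the
`A`-coordinates with `|h| = 1` gives the bound with `C = 4`.
-/

theorem Nat.centralBinom_sq_mul_le (t : ℕ) : t.centralBinom ^ 2 * (2 * t + 1) ≤ 16 ^ t := by
  induction t with
  | zero => simp
  | succ t ih =>
    have hstep := Nat.succ_mul_centralBinom_succ t
    refine Nat.le_of_mul_le_mul_left (c := (t + 1) ^ 2) ?_ (pow_pos t.succ_pos 2)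
    calc (t + 1) ^ 2 * ((t + 1).centralBinom ^ 2 * (2 * (t + 1) + 1))
        = 4 * (2 * t + 1) * (2 * t + 3) * (t.centralBinom ^ 2 * (2 * t + 1)) := by
          rw [show (t + 1) ^ 2 * ((t + 1).centralBinom ^ 2 * (2 * (t + 1) + 1))
            = ((t + 1) * (t + 1).centralBinom) ^ 2 * (2 * t + 3) by ring, hstep]
          ring
      _ ≤ 4 * (2 * t + 1) * (2 * t + 3) * 16 ^ t := Nat.mul_le_mul_left _ ih
      _ ≤ (t + 1) ^ 2 * 16 * 16 ^ t := Nat.mul_le_mul_right _ (by nlinarith)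
      _ = (t + 1) ^ 2 * 16 ^ (t + 1) := by ring

theorem Nat.choose_sq_mul_le (m r : ℕ) : m.choose r ^ 2 * m ≤ 4 ^ m := by
  obtain ⟨t, rfl | rfl⟩ := m.even_or_odd'
  · calc (2 * t).choose r ^ 2 * (2 * t) ≤ t.centralBinom ^ 2 * (2 * t + 1) := by
          gcongr
          · exact Nat.choose_le_centralBinom r t
          · omega
      _ ≤ 4 ^ (2 * t) := by rw [pow_mul]; exact Nat.centralBinom_sq_mul_le t
  · have hchoose : (2 * t + 1).choose r ≤ 2 * t.centralBinom := by
      cases r with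
      | zero => simp; linarith [t.centralBinom_pos]
      | succ r =>
        rw [Nat.choose_succ_succ']
        linarith [Nat.choose_le_centralBinom r t, Nat.choose_le_centralBinom (r + 1) t]
    calc (2 * t + 1).choose r ^ 2 * (2 * t + 1) ≤ (2 * t.centralBinom) ^ 2 * (2 * t + 1) := by
          gcongr
      _ = 4 * (t.centralBinom ^ 2 * (2 * t + 1)) := by ring
      _ ≤ 4 * 16 ^ t := by gcongr; exact Nat.centralBinom_sq_mul_le t
      _ = 4 ^ (2 * t + 1) := by rw [pow_succ, pow_mul]; ring

theorem Nat.choose_mul_sqrt_le_two_pow (m r : ℕ) : (m.choose r : ℝ) * √m ≤ 2 ^ m := by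
  have h : ((m.choose r : ℝ) * √m) ^ 2 ≤ (2 ^ m) ^ 2 := by
    rw [mul_pow, Real.sq_sqrt (Nat.cast_nonneg m), ← pow_mul, mul_comm m 2, pow_mul]
    exact_mod_cast Nat.choose_sq_mul_le m r
  exact (pow_le_pow_iff_left₀ (by positivity) (by positivity) two_ne_zero).1 h

theorem sum_mul_sign_eq {ι : Type*} (J : Finset ι) (v : ι → ℝ)
    (hv : ∀ j ∈ J, v j = 1 ∨ v j = -1) (s : ι → Bool) :
    ∑ j ∈ J, v j * (if s j then 1 else -1) = #J - 2 * #{j ∈ J | s j = decide (v j = -1)} := by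
  rw [natCast_card_filter, card_eq_sum_ones, Nat.cast_sum, mul_sum, ← sum_sub_distrib]
  refine sum_congr rfl fun j hj => ?_
  rcases hv j hj with h | h <;> cases s j <;> norm_num [h]

theorem mem_Icc_ceil_of_abs_sub_two_mul_le {x : ℝ} {N k : ℕ} (h : |x - 2 * N| ≤ k) :
    N ∈ Icc ⌈(x - k) / 2⌉₊ (⌈(x - k) / 2⌉₊ + k) := by
  rw [abs_le] at h
  refine mem_Icc.2 ⟨Nat.ceil_le.2 (by linarith), ?_⟩
  have := Nat.le_ceil ((x - k) / 2)
  exact_mod_cast (show (N : ℝ) ≤ ⌈(x - k) / 2⌉₊ + k by linarith)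

section AntiConcentration

variable {ι : Type*} [Fintype ι] [DecidableEq ι]

open Polynomial in
theorem card_filter_card_filter_eq (J : Finset ι) (t : ι → Bool) (r : ℕ) :
    #{s : ι → Bool | #{j ∈ J | s j = t j} = r} = 2 ^ (Fintype.card ι - #J) * (#J).choose r := by
  have hgen : ∑ s : ι → Bool, (X : ℕ[X]) ^ #{j ∈ J | s j = t j}
      = C (2 ^ (Fintype.card ι - #J)) * (X + 1) ^ #J := by
    calc ∑ s : ι → Bool, (X : ℕ[X]) ^ #{j ∈ J | s j = t j}
        = ∑ s : ι → Bool, ∏ j, if j ∈ J ∧ s j = t j then X else 1 := by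
          refine sum_congr rfl fun s _ => ?_
          rw [prod_ite, prod_const, prod_const_one, mul_one, ← filter_filter, filter_mem_eq_inter,
            univ_inter]
      _ = ∏ j, ∑ b : Bool, if j ∈ J ∧ b = t j then X else 1 :=
          (Fintype.prod_sum fun j (b : Bool) => if j ∈ J ∧ b = t j then (X : ℕ[X]) else 1).symm
      _ = ∏ j, if j ∈ J then X + 1 else 2 := by
          refine prod_congr rfl fun j _ => ?_
          split_ifs with hj <;> cases t j <;> simp [hj, add_comm, one_add_one_eq_two]
      _ = C (2 ^ (Fintype.card ι - #J)) * (X + 1) ^ #J := by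
          rw [prod_ite, prod_const, prod_const, mul_comm, filter_mem_eq_inter, univ_inter,
            filter_notMem_eq_sdiff, ← compl_eq_univ_sdiff, card_compl, map_pow, map_ofNat]
  have hcoeff := congrArg (coeff · r) hgen
  simp only [finsetSum_coeff, coeff_X_pow, coeff_C_mul, coeff_X_add_one_pow] at hcoeff
  simpa [sum_boole, eq_comm] using hcoeff

theorem card_filter_card_filter_eq_mul_sqrt_le (J : Finset ι) (t : ι → Bool) (r : ℕ) :
    (#{s : ι → Bool | #{j ∈ J | s j = t j} = r} : ℝ) * √(#J : ℝ) ≤ 2 ^ Fintype.card ι := by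
  rw [card_filter_card_filter_eq, Nat.cast_mul, Nat.cast_pow, Nat.cast_ofNat, mul_assoc]
  calc (2 : ℝ) ^ (Fintype.card ι - #J) * ((#J).choose r * √(#J : ℝ))
      ≤ 2 ^ (Fintype.card ι - #J) * 2 ^ #J := by
        gcongr; exact Nat.choose_mul_sqrt_le_two_pow _ _
    _ = 2 ^ Fintype.card ι := by rw [← pow_add, Nat.sub_add_cancel (card_le_univ J)]

theorem card_filter_card_filter_mem_Icc_mul_sqrt_le (J : Finset ι) (t : ι → Bool) (r₀ k : ℕ) :
    (#{s : ι → Bool | #{j ∈ J | s j = t j} ∈ Icc r₀ (r₀ + k)} : ℝ) * √(#J : ℝ)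
      ≤ (k + 1) * 2 ^ Fintype.card ι := by
  rw [← sum_card_fiberwise_eq_card_filter, Nat.cast_sum, sum_mul]
  calc ∑ r ∈ Icc r₀ (r₀ + k), (#{s : ι → Bool | #{j ∈ J | s j = t j} = r} : ℝ) * √(#J : ℝ)
      ≤ ∑ _r ∈ Icc r₀ (r₀ + k), (2 : ℝ) ^ Fintype.card ι :=
        sum_le_sum fun r _ => card_filter_card_filter_eq_mul_sqrt_le J t r
    _ = (k + 1) * 2 ^ Fintype.card ι := by
        rw [sum_const, Nat.card_Icc, show r₀ + k + 1 - r₀ = k + 1 by omega, nsmul_eq_mul]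
        push_cast; ring

theorem card_abs_sum_sign_div_add_sub_le_mul_sqrt_le (J : Finset ι) (v : ι → ℝ)
    (hv : ∀ j ∈ J, v j = 1 ∨ v j = -1) {σ : ℝ} (hσ : 0 < σ) (b c : ℝ) (k : ℕ) :
    (#{s : ι → Bool | |∑ j ∈ J, v j * ((if s j then 1 else -1) / σ) + b - c| ≤ k / σ} : ℝ)
        * √(#J : ℝ) ≤ (k + 1) * 2 ^ Fintype.card ι := by
  refine le_trans ?_ (card_filter_card_filter_mem_Icc_mul_sqrt_le J (fun j => decide (v j = -1))
    ⌈(#J - (c - b) * σ - k) / 2⌉₊ k)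
  gcongr with s
  intro hs
  apply mem_Icc_ceil_of_abs_sub_two_mul_le
  have hsum : ∑ j ∈ J, v j * ((if s j then 1 else -1) / σ) + b - c
      = (#J - (c - b) * σ - 2 * #{j ∈ J | s j = decide (v j = -1)}) / σ := by
    simp_rw [mul_div_assoc', ← sum_div, sum_mul_sign_eq J v hv s]
    field_simp
    ring
  rwa [hsum, abs_div, abs_of_pos hσ, div_le_div_iff_of_pos_right hσ] at hs

theorem card_abs_sum_sign_div_add_sub_le (J : Finset ι) (hJ : J.Nonempty) (v : ι → ℝ)
    (hv : ∀ j ∈ J, v j = 1 ∨ v j = -1) {σ : ℝ} (hσ : 0 < σ) (b c : ℝ) {k : ℕ} (hk : 0 < k) :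
    (#{s : ι → Bool | |∑ j ∈ J, v j * ((if s j then 1 else -1) / σ) + b - c| ≤ k / σ} : ℝ)
        / 2 ^ Fintype.card ι ≤ 2 * k / √(#J : ℝ) := by
  rw [div_le_div_iff₀ (by positivity) (Real.sqrt_pos.2 (Nat.cast_pos.2 hJ.card_pos))]
  calc _ ≤ ((k : ℝ) + 1) * 2 ^ Fintype.card ι :=
        card_abs_sum_sign_div_add_sub_le_mul_sqrt_le J v hv hσ b c k
    _ ≤ 2 * (k : ℝ) * 2 ^ Fintype.card ι := by gcongr; norm_cast; omega

end AntiConcentration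

theorem abs_sigma6'_add_sub_indicator_le {a x κ : ℝ} (ha : |a| ≤ κ) :
    |sigma6' (a + x) - (if κ < x ∧ x < 6 - κ then 1 else 0)|
      ≤ (if |x| ≤ κ then 1 else 0) + (if |x - 6| ≤ κ then 1 else 0) := by
  unfold sigma6'
  split_ifs <;> grind [abs_le]

theorem abs_avg_sigma6'_add_sub_avg_le {α : Type*} [Fintype α] {a κ N ε : ℝ} (ha : |a| ≤ κ)
    (hN : 0 < N) (x : α → ℝ) (hx : ∀ c, (#{s | |x s - c| ≤ κ} : ℝ) / N ≤ ε) :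
    |1 / N * ∑ s, sigma6' (a + x s) - 1 / N * ∑ s, (if κ < x s ∧ x s < 6 - κ then 1 else 0)|
      ≤ 2 * ε := by
  have hsum : |∑ s, sigma6' (a + x s) - ∑ s, (if κ < x s ∧ x s < 6 - κ then 1 else 0)|
      ≤ #{s | |x s - 0| ≤ κ} + #{s | |x s - 6| ≤ κ} := by
    rw [← sum_sub_distrib, natCast_card_filter, natCast_card_filter, ← sum_add_distrib]
    simp only [sub_zero]
    exact (abs_sum_le_sum_abs _ _).trans
      (sum_le_sum fun s _ => abs_sigma6'_add_sub_indicator_le ha)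
  rw [← mul_sub, abs_mul, abs_of_pos (one_div_pos.2 hN), one_div_mul_eq_div, two_mul]
  calc _ ≤ ((#{s | |x s - 0| ≤ κ} : ℝ) + #{s | |x s - 6| ≤ κ}) / N := by gcongr
    _ ≤ ε + ε := by rw [add_div]; exact add_le_add (hx 0) (hx 6)

theorem sum_mul_ite_mem_eq {κ R : Type*} [Fintype κ] [DecidableEq κ] [NonUnitalNonAssocSemiring R]
    [DecidableEq R] (A : Finset κ) (w x y : κ → R) :
    ∑ i, w i * (if i ∈ A then x i else y i)
      = ∑ i ∈ A, w i * x i + ∑ j ∈ univ.filter (fun j => j ∉ A ∧ w j ≠ 0), w j * y j := by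
  simp only [mul_ite]
  rw [sum_ite, filter_mem_eq_inter, univ_inter, ← filter_filter,
    sum_filter_of_ne fun j _ hj => left_ne_zero_of_mul hj]

theorem abs_sum_mul_le_of_abs_le {κ : Type*} {A : Finset κ} {w x : κ → ℝ} {K δ : ℝ}
    (hw : ∑ i ∈ A, |w i| ≤ K) (hx : ∀ i ∈ A, |x i| ≤ δ) (hδ : 0 ≤ δ) :
    |∑ i ∈ A, w i * x i| ≤ K * δ :=
  calc |∑ i ∈ A, w i * x i| ≤ ∑ i ∈ A, |w i| * δ := by
        refine (abs_sum_le_sum_abs _ _).trans (sum_le_sum fun i hi => ?_)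
        rw [abs_mul]; gcongr; exact hx i hi
    _ ≤ K * δ := by rw [← sum_mul]; gcongr

theorem abs_sum_mul_mul_sub_le {Ω : Type*} [Fintype Ω] {p h P : Ω → ℝ} {Q ε : ℝ}
    (hp : ∀ ω, 0 ≤ p ω) (hp1 : ∑ ω, p ω = 1) (hh : ∀ ω, |h ω| ≤ 1) (hP : ∀ ω, |P ω - Q| ≤ ε) :
    |∑ ω, p ω * (h ω * P ω) - (∑ ω, p ω * h ω) * Q| ≤ ε :=
  calc |∑ ω, p ω * (h ω * P ω) - (∑ ω, p ω * h ω) * Q|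
      = |∑ ω, p ω * (h ω * (P ω - Q))| := by
        rw [sum_mul, ← sum_sub_distrib]; simp only [mul_sub, mul_assoc]
    _ ≤ ∑ ω, p ω * ε := by
        refine (abs_sum_le_sum_abs _ _).trans (sum_le_sum fun ω _ => ?_)
        rw [abs_mul, abs_mul, abs_of_nonneg (hp ω)]
        gcongr
        · exact hp ω
        · simpa using mul_le_mul (hh ω) (hP ω) (abs_nonneg _) zero_le_one
    _ = ε := by rw [← sum_mul, hp1, one_mul]

/-- For a product distribution where the coordinates in `A` (sampled from a finite sample
space `Fin M` with pmf `p`) and the coordinates outside `A` (i.i.d. uniform on `{±1/√n}`) are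
independent, a function `h` depending only on the `A`-coordinates, and a gate `σ'(⟨w,x⟩+b)`:
`|E[h(x)σ'(⟨w,x⟩+b)] − E[h(x)]·φ(w,b)| ≤ Ck/√|J|` for a universal constant `C`. -/
theorem stmt_7 :
    ∃ C : ℝ, 0 < C ∧
      ∀ (n k M : ℕ), 0 < n → 0 < k → 0 < M →
        ∀ (A : Finset (Fin n)) (p : Fin M → ℝ),
          (∀ ω, 0 ≤ p ω) → (∑ ω, p ω = 1) →
        ∀ (xa : Fin M → Fin n → ℝ), (∀ ω j, j ∈ A → |xa ω j| ≤ 1 / Real.sqrt n) →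
        ∀ (h : Fin M → ℝ), (∀ ω, h ω = 1 ∨ h ω = -1) →
        ∀ (w : Fin n → ℝ), (∀ i, w i = -1 ∨ w i = 0 ∨ w i = 1) →
          (∑ j ∈ A, |w j| ≤ (k : ℝ)) →
        ∀ (b : ℝ),
        (Finset.univ.filter (fun j : Fin n => j ∉ A ∧ w j ≠ 0)).Nonempty →
        |(∑ ω, p ω * ((1 / 2 ^ n : ℝ) * ∑ s : Fin n → Bool,
            h ω * sigma6' ((∑ i, w i *
              (if i ∈ A then xa ω i else (if s i then 1 else -1) / Real.sqrt n)) + b))) -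
          (∑ ω, p ω * h ω) *
            ((1 / 2 ^ n : ℝ) * ∑ s : Fin n → Bool,
              (if ((k : ℝ) / Real.sqrt n <
                    (∑ j ∈ Finset.univ.filter (fun j : Fin n => j ∉ A ∧ w j ≠ 0),
                      w j * ((if s j then 1 else -1) / Real.sqrt n)) + b ∧
                    (∑ j ∈ Finset.univ.filter (fun j : Fin n => j ∉ A ∧ w j ≠ 0),
                      w j * ((if s j then 1 else -1) / Real.sqrt n)) + b <
                      6 - (k : ℝ) / Real.sqrt n) then 1 else 0))|
          ≤ C * k / Real.sqrt ((Finset.univ.filter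
              (fun j : Fin n => j ∉ A ∧ w j ≠ 0)).card) := by
  refine ⟨4, by norm_num, ?_⟩
  intro n k M hn hk _ A p hp hp1 xa hxa h hh w hw hwA b hJ
  set J := univ.filter (fun j : Fin n => j ∉ A ∧ w j ≠ 0)
  set S : (Fin n → Bool) → ℝ := fun s => ∑ j ∈ J, w j * ((if s j then 1 else -1) / √n) + b
  have hsn : 0 < √(n : ℝ) := Real.sqrt_pos.2 (Nat.cast_pos.2 hn)
  have hwJ : ∀ j ∈ J, w j = 1 ∨ w j = -1 := fun j hj => by
    have := (mem_filter.1 hj).2.2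
    rcases hw j with h | h | h <;> simp_all
  have ha : ∀ ω, |∑ i ∈ A, w i * xa ω i| ≤ k / √n := fun ω => by
    simpa only [mul_one_div] using abs_sum_mul_le_of_abs_le hwA (hxa ω) (by positivity)
  have hwindow : ∀ c, (#{s | |S s - c| ≤ k / √n} : ℝ) / 2 ^ n ≤ 2 * k / √(#J : ℝ) := fun c => by
    simpa using card_abs_sum_sign_div_add_sub_le J hJ w hwJ hsn b c hk
  have hsplit : ∀ ω, 1 / 2 ^ n * ∑ s : Fin n → Bool, h ω * sigma6' ((∑ i, w i *
      (if i ∈ A then xa ω i else (if s i then 1 else -1) / √n)) + b)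
      = h ω * (1 / 2 ^ n * ∑ s, sigma6' (∑ i ∈ A, w i * xa ω i + S s)) := fun ω => by
    simp only [sum_mul_ite_mem_eq, ← mul_sum, add_assoc, S]
    ring
  simp only [hsplit]
  refine (abs_sum_mul_mul_sub_le hp hp1 (fun ω => by rcases hh ω with h | h <;> simp [h])
    fun ω => abs_avg_sigma6'_add_sub_avg_le (ha ω) (by positivity) S hwindow).trans_eq ?_
  ring
end

section
/- Let w be drawn uniformly from {−1,0,1}^k with k odd. Then the probability that ∑_{i=1}^k w_i = 0 is at least 1/(6√k). -/
open Finset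
open scoped BigOperators Classical

/-!
Group the vectors `w ∈ {-1, 0, 1}^k` by the set `A` of their nonzero coordinates. When `#A` is
even, choosing the half of `A` where `w = 1` gives `C(#A, #A/2)` zero-sum vectors, and
`C(2m, m) ≥ 4^m / (2√m) ≥ 2^(2m) / (2√k)`. For odd `k`, the sets of even size satisfy
`∑ 2^#A = ((2 + 1)^k + (-2 + 1)^k) / 2 = (3^k - 1) / 2`, so there are at least
`(3^k - 1) / (4√k) ≥ 3^k / (6√k)` zero-sum vectors.
-/

theorem Nat.four_pow_sq_le_mul_centralBinom_sq {n : ℕ} (hn : n ≠ 0) :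
    (4 ^ n) ^ 2 ≤ 4 * n * n.centralBinom ^ 2 := by
  induction n with
  | zero => contradiction
  | succ n ih =>
    rcases Nat.eq_zero_or_pos n with rfl | hpos
    · simp [Nat.centralBinom, Nat.choose]
    have ih := ih hpos.ne'
    have hrec := Nat.succ_mul_centralBinom_succ n
    suffices (n + 1) * (4 ^ (n + 1)) ^ 2 ≤ (n + 1) * (4 * (n + 1) * (n + 1).centralBinom ^ 2) from
      Nat.le_of_mul_le_mul_left this n.succ_pos
    calc (n + 1) * (4 ^ (n + 1)) ^ 2 = 16 * (n + 1) * (4 ^ n) ^ 2 := by ring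
      _ ≤ 16 * (n + 1) * (4 * n * n.centralBinom ^ 2) := by gcongr
      _ ≤ 4 * (2 * (2 * n + 1) * n.centralBinom) ^ 2 := by
        have : 4 * n * (n + 1) ≤ (2 * n + 1) ^ 2 := by nlinarith
        nlinarith
      _ = (n + 1) * (4 * (n + 1) * (n + 1).centralBinom ^ 2) := by rw [← hrec]; ring

theorem Nat.four_pow_le_two_mul_sqrt_mul_centralBinom {n : ℕ} (hn : n ≠ 0) :
    (4 : ℝ) ^ n ≤ 2 * √n * n.centralBinom := by
  have h := Nat.four_pow_sq_le_mul_centralBinom_sq hn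
  refine le_of_sq_le_sq ?_ (by positivity)
  rw [mul_pow, mul_pow, Real.sq_sqrt n.cast_nonneg, show (2 : ℝ) ^ 2 = 4 by norm_num]
  exact_mod_cast h

theorem Fintype.sum_two_pow_card_even_of_odd_card {ι : Type*} [Fintype ι]
    (hι : Odd (Fintype.card ι)) :
    ∑ A : Finset ι with Even #A, (2 : ℝ) ^ #A = (3 ^ Fintype.card ι - 1) / 2 := by
  have hsum (x : ℝ) : ∑ A : Finset ι, x ^ #A = (x + 1) ^ Fintype.card ι := by
    simpa using Fintype.sum_pow_mul_eq_add_pow ι x 1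
  have hparity : ∑ A : Finset ι, ((2 : ℝ) ^ #A + (-2) ^ #A) =
      2 * ∑ A : Finset ι with Even #A, (2 : ℝ) ^ #A := by
    rw [sum_filter, mul_sum]
    refine Finset.sum_congr rfl fun A _ => ?_
    rcases Nat.even_or_odd #A with h | h
    · rw [h.neg_pow, if_pos h]; ring
    · rw [h.neg_pow, if_neg (Nat.not_even_iff_odd.mpr h)]; ring
  rw [sum_add_distrib, hsum, hsum] at hparity
  norm_num [hι.neg_pow] at hparity
  linarith

section Ternary

variable {ι : Type*} [Fintype ι] [DecidableEq ι]

/-- Under the encoding `t ↦ t - 1` of `Fin 3` as `{-1, 0, 1}`: the vector equal to `1` on `B`,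
`-1` on `A \ B` and `0` off `A`. -/
def ternaryVector (A B : Finset ι) (i : ι) : Fin 3 :=
  if i ∈ B then 2 else if i ∈ A then 0 else 1

theorem sum_ternaryVector {A B : Finset ι} (hBA : B ⊆ A) :
    ∑ i, ((ternaryVector A B i : ℝ) - 1) = 2 * #B - #A := by
  have hcoord (i : ι) : (ternaryVector A B i : ℝ) - 1 =
      2 * (if i ∈ B then 1 else 0) - (if i ∈ A then 1 else 0) := by
    by_cases hB : i ∈ B
    · simp [ternaryVector, hB, hBA hB]
    · by_cases hA : i ∈ A <;> simp [ternaryVector, hA, hB]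
  simp only [hcoord, sum_sub_distrib, ← mul_sum, sum_boole, filter_mem_eq_inter, univ_inter]

theorem filter_ternaryVector_eq_two (A B : Finset ι) :
    ({i | ternaryVector A B i = 2} : Finset ι) = B := by
  ext i
  simp only [mem_filter, mem_univ, true_and]
  unfold ternaryVector
  split_ifs <;> simp_all

theorem filter_ternaryVector_ne_one {A B : Finset ι} (hBA : B ⊆ A) :
    ({i | ternaryVector A B i ≠ 1} : Finset ι) = A := by
  ext i
  simp only [mem_filter, mem_univ, true_and]
  unfold ternaryVector
  split_ifs with hB hA
  · simp [hBA hB]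
  · simp [hA]
  · simp [hA]

theorem sum_choose_half_le_card_sum_eq_zero :
    ∑ A : Finset ι with Even #A, (#A).choose (#A / 2) ≤
      #{w : ι → Fin 3 | ∑ i, ((w i : ℝ) - 1) = 0} := by
  let pairs := ({A : Finset ι | Even #A} : Finset (Finset ι)).sigma fun A => A.powersetCard (#A / 2)
  have hpairs : #pairs = ∑ A : Finset ι with Even #A, (#A).choose (#A / 2) := by
    simp only [pairs, card_sigma, card_powersetCard]
  rw [← hpairs]
  have mem_pairs {A B : Finset ι} (h : ⟨A, B⟩ ∈ pairs) : B ⊆ A ∧ 2 * #B = #A := by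
    simp only [pairs, mem_sigma, mem_filter, mem_univ, true_and, mem_powersetCard] at h
    obtain ⟨⟨m, hm⟩, hBA, hB⟩ := h
    exact ⟨hBA, by omega⟩
  refine card_le_card_of_injOn (fun p => ternaryVector p.1 p.2) ?_ ?_
  · rintro ⟨A, B⟩ hp
    obtain ⟨hBA, hB⟩ := mem_pairs hp
    simp only [coe_filter, mem_univ, true_and, Set.mem_ofPred_eq, sum_ternaryVector hBA]
    rw [← hB]
    push_cast
    ring
  · rintro ⟨A, B⟩ hp ⟨A', B'⟩ hp' (heq : ternaryVector A B = ternaryVector A' B')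
    have hA : A = A' := by
      rw [← filter_ternaryVector_ne_one (mem_pairs hp).1,
        ← filter_ternaryVector_ne_one (mem_pairs hp').1, heq]
    have hB : B = B' := by
      rw [← filter_ternaryVector_eq_two A B, ← filter_ternaryVector_eq_two A' B', heq]
    rw [hA, hB]

end Ternary

theorem two_pow_le_two_mul_sqrt_mul_choose_half {m k : ℕ} (hm : Even m) (hmk : m ≤ k)
    (hk : k ≠ 0) : (2 : ℝ) ^ m ≤ 2 * √k * m.choose (m / 2) := by
  obtain ⟨j, rfl⟩ := hm
  rcases Nat.eq_zero_or_pos j with rfl | hj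
  · have : (1 : ℝ) ≤ √k := Real.one_le_sqrt.mpr (by exact_mod_cast Nat.one_le_iff_ne_zero.mpr hk)
    norm_num
    linarith
  rw [← two_mul, Nat.mul_div_cancel_left j two_pos, ← Nat.centralBinom_eq_two_mul_choose, pow_mul]
  calc ((2 : ℝ) ^ 2) ^ j = 4 ^ j := by norm_num
    _ ≤ 2 * √j * j.centralBinom := Nat.four_pow_le_two_mul_sqrt_mul_centralBinom hj.ne'
    _ ≤ 2 * √k * j.centralBinom := by gcongr; omega

/-- For `w` uniform in `{-1,0,1}^k` (encoded as `Fin k → Fin 3` via `t ↦ t - 1`) with `k` odd,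
the probability that `∑ w_i = 0` is at least `1/(6√k)`. -/
theorem stmt_8 (k : ℕ) (hk : Odd k) :
    (1 / (6 * Real.sqrt k)) * 3 ^ k ≤
      ((Finset.univ.filter (fun w : Fin k → Fin 3 =>
        ∑ i, ((w i : ℝ) - 1) = 0)).card : ℝ) := by
  have hk0 : k ≠ 0 := hk.pos.ne'
  have hsqrt : 0 < √(k : ℝ) := by positivity
  have h3k : (3 : ℝ) ≤ 3 ^ k := le_self_pow₀ (by norm_num) hk0
  calc 1 / (6 * √k) * 3 ^ k ≤ (3 ^ k - 1) / 2 / (2 * √k) := by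
        rw [div_div, one_div_mul_eq_div, div_le_div_iff₀ (by positivity) (by positivity)]
        nlinarith
    _ = ∑ A : Finset (Fin k) with Even #A, (2 : ℝ) ^ #A / (2 * √k) := by
        rw [← sum_div, Fintype.sum_two_pow_card_even_of_odd_card (by simpa using hk),
          Fintype.card_fin]
    _ ≤ ∑ A : Finset (Fin k) with Even #A, ((#A).choose (#A / 2) : ℝ) := by
        refine sum_le_sum fun A hA => div_le_of_le_mul₀ (by positivity) (by positivity) ?_
        rw [mul_comm]
        exact two_pow_le_two_mul_sqrt_mul_choose_half (mem_filter.mp hA).2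
          (by simpa using card_le_univ A) hk0
    _ ≤ _ := by exact_mod_cast sum_choose_half_le_card_sum_eq_zero
end

section
/- (Online gradient descent regret bound.) Let f₁, …, f_T : ℝ^d → ℝ be convex differentiable functions and fix η > 0. Fix θ₁ ∈ ℝ^d and define θ_{t+1} = θ_t − η∇f_t(θ_t). Then for every θ* ∈ ℝ^d: (1/T)∑_{t=1}^T f_t(θ_t) ≤ (1/T)∑_{t=1}^T f_t(θ*) + ‖θ*‖²/(2ηT) + ‖θ₁‖·(1/T)∑_{t=1}^T ‖∇f_t(θ_t)‖ + η·(1/T)∑_{t=1}^T ‖∇f_t(θ_t)‖². -/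
/-!
Convexity bounds `f t (θ t) - f t θ*` by `⟪g t, θ t - θ*⟫`. Write `θ t - θ* = (θ t - u) + θ 0` with
the shifted comparator `u = θ 0 + θ*`: the second part costs at most `‖θ 0‖ ‖g t‖` by
Cauchy–Schwarz, and for the first a gradient step gives
`⟪g t, θ t - u⟫ = (‖θ t - u‖² - ‖θ (t + 1) - u‖²) / (2η) + (η / 2) ‖g t‖²`, which telescopes to at
most `‖θ 0 - u‖² / (2η) = ‖θ*‖² / (2η)` plus the gradient terms.
-/

open Finset
open scoped RealInnerProductSpace

theorem ConvexOn.add_fderiv_sub_le {E : Type*} [NormedAddCommGroup E] [NormedSpace ℝ E]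
    {s : Set E} {f : E → ℝ} {f' : E →L[ℝ] ℝ} {x y : E} (hf : ConvexOn ℝ s f) (hx : x ∈ s)
    (hy : y ∈ s) (hf' : HasFDerivAt f f' x) :
    f x + f' (y - x) ≤ f y := by
  have hline := hf.comp_affineMap (AffineMap.lineMap (k := ℝ) x y)
  have hderiv : HasDerivAt (f ∘ AffineMap.lineMap (k := ℝ) x y) (f' (y - x)) 0 :=
    HasFDerivAt.comp_hasDerivAt (0 : ℝ) (by simpa using hf') AffineMap.hasDerivAt_lineMap
  have := hline.le_slope_of_hasDerivAt (by simpa using hx) (by simpa using hy) one_pos hderiv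
  simp only [slope_def_field, Function.comp_apply, AffineMap.lineMap_apply_zero,
    AffineMap.lineMap_apply_one, sub_zero, div_one] at this
  linarith

theorem ConvexOn.add_inner_sub_le_of_hasGradientAt {E : Type*} [NormedAddCommGroup E]
    [InnerProductSpace ℝ E] [CompleteSpace E] {s : Set E} {f : E → ℝ} {g x y : E}
    (hf : ConvexOn ℝ s f) (hx : x ∈ s) (hy : y ∈ s) (hg : HasGradientAt f g x) :
    f x + ⟪g, y - x⟫ ≤ f y := by
  simpa using hf.add_fderiv_sub_le hx hy (hasGradientAt_iff_hasFDerivAt.mp hg)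

theorem inner_eq_norm_sq_sub_norm_sub_smul_sq {E : Type*} [NormedAddCommGroup E]
    [InnerProductSpace ℝ E] {η : ℝ} (hη : η ≠ 0) (v a : E) :
    ⟪v, a⟫ = (‖a‖ ^ 2 - ‖a - η • v‖ ^ 2) / (2 * η) + η / 2 * ‖v‖ ^ 2 := by
  rw [norm_sub_sq_real, inner_smul_right, norm_smul, mul_pow, Real.norm_eq_abs, sq_abs,
    real_inner_comm]
  field_simp
  ring

section GradientSteps

variable {E : Type*} [NormedAddCommGroup E] [InnerProductSpace ℝ E] {η : ℝ} {θ G : ℕ → E}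

theorem sum_inner_sub_le_of_gradient_steps (hη : 0 < η)
    (hstep : ∀ t, θ (t + 1) = θ t - η • G t) (T : ℕ) (u : E) :
    ∑ t ∈ range T, ⟪G t, θ t - u⟫ ≤ ‖θ 0 - u‖ ^ 2 / (2 * η) + η / 2 * ∑ t ∈ range T, ‖G t‖ ^ 2 := by
  have hterm : ∀ t, ⟪G t, θ t - u⟫ =
      (‖θ t - u‖ ^ 2 - ‖θ (t + 1) - u‖ ^ 2) / (2 * η) + η / 2 * ‖G t‖ ^ 2 := by
    intro t
    rw [inner_eq_norm_sq_sub_norm_sub_smul_sq hη.ne', hstep, sub_right_comm]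
  simp only [hterm, sum_add_distrib, ← sum_div, ← mul_sum,
    sum_range_sub' (fun t => ‖θ t - u‖ ^ 2)]
  gcongr
  exact sub_le_self _ (sq_nonneg _)

theorem sum_le_sum_add_of_gradient_steps [CompleteSpace E] {f : ℕ → E → ℝ}
    (hf : ∀ t, ConvexOn ℝ Set.univ (f t)) (hG : ∀ t, HasGradientAt (f t) (G t) (θ t)) (hη : 0 < η)
    (hstep : ∀ t, θ (t + 1) = θ t - η • G t) (T : ℕ) (u : E) :
    ∑ t ∈ range T, f t (θ t) ≤ ∑ t ∈ range T, f t u + ‖u‖ ^ 2 / (2 * η) +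
      ‖θ 0‖ * ∑ t ∈ range T, ‖G t‖ + η / 2 * ∑ t ∈ range T, ‖G t‖ ^ 2 := by
  have hterm : ∀ t, f t (θ t) ≤ f t u + ⟪G t, θ t - (θ 0 + u)⟫ + ‖θ 0‖ * ‖G t‖ := by
    intro t
    have hconv := (hf t).add_inner_sub_le_of_hasGradientAt (Set.mem_univ _) (Set.mem_univ u) (hG t)
    have hsplit : ⟪G t, u - θ t⟫ = -⟪G t, θ t - (θ 0 + u)⟫ - ⟪G t, θ 0⟫ := by
      rw [← inner_neg_right, ← inner_sub_right]
      congr 1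
      abel
    linarith [real_inner_le_norm (G t) (θ 0)]
  have hlinear := sum_inner_sub_le_of_gradient_steps hη hstep T (θ 0 + u)
  rw [sub_add_cancel_left, norm_neg] at hlinear
  calc ∑ t ∈ range T, f t (θ t)
      ≤ ∑ t ∈ range T, (f t u + ⟪G t, θ t - (θ 0 + u)⟫ + ‖θ 0‖ * ‖G t‖) :=
        sum_le_sum fun t _ => hterm t
    _ = ∑ t ∈ range T, f t u + ∑ t ∈ range T, ⟪G t, θ t - (θ 0 + u)⟫ +
          ‖θ 0‖ * ∑ t ∈ range T, ‖G t‖ := by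
      rw [sum_add_distrib, sum_add_distrib, mul_sum]
    _ ≤ _ := by linarith

end GradientSteps

theorem stmt_12_general {d : ℕ} (T : ℕ) (η : ℝ) (hη : 0 < η)
    (f : ℕ → EuclideanSpace ℝ (Fin d) → ℝ)
    (g : ℕ → EuclideanSpace ℝ (Fin d) → EuclideanSpace ℝ (Fin d))
    (hconv : ∀ t, ConvexOn ℝ Set.univ (f t))
    (hgrad : ∀ t θ', HasGradientAt (f t) (g t θ') θ')
    (θ : ℕ → EuclideanSpace ℝ (Fin d))
    (hupd : ∀ t, θ (t + 1) = θ t - η • g t (θ t)) :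
    ∀ θs : EuclideanSpace ℝ (Fin d),
      (1 / T : ℝ) * ∑ t ∈ Finset.range T, f t (θ t) ≤
        (1 / T : ℝ) * ∑ t ∈ Finset.range T, f t θs + ‖θs‖ ^ 2 / (2 * η * T) +
        ‖θ 0‖ * ((1 / T : ℝ) * ∑ t ∈ Finset.range T, ‖g t (θ t)‖) +
        η * ((1 / T : ℝ) * ∑ t ∈ Finset.range T, ‖g t (θ t)‖ ^ 2) := by
  intro θs
  have hregret := sum_le_sum_add_of_gradient_steps hconv (fun t => hgrad t (θ t)) hη hupd T θs
  have hsq : η / 2 * ∑ t ∈ range T, ‖g t (θ t)‖ ^ 2 ≤ η * ∑ t ∈ range T, ‖g t (θ t)‖ ^ 2 := by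
    gcongr
    linarith
  calc (1 / T : ℝ) * ∑ t ∈ range T, f t (θ t)
      ≤ (1 / T : ℝ) * (∑ t ∈ range T, f t θs + ‖θs‖ ^ 2 / (2 * η) +
          ‖θ 0‖ * ∑ t ∈ range T, ‖g t (θ t)‖ + η * ∑ t ∈ range T, ‖g t (θ t)‖ ^ 2) := by
        gcongr
        linarith
    _ = _ := by ring

/-- Online gradient descent regret bound with arbitrary starting point `θ₀`. -/
theorem stmt_12 {d : ℕ} (T : ℕ) (hT : 0 < T) (η : ℝ) (hη : 0 < η)
    (f : ℕ → EuclideanSpace ℝ (Fin d) → ℝ)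
    (g : ℕ → EuclideanSpace ℝ (Fin d) → EuclideanSpace ℝ (Fin d))
    (hconv : ∀ t, ConvexOn ℝ Set.univ (f t))
    (hgrad : ∀ t θ', HasGradientAt (f t) (g t θ') θ')
    (θ : ℕ → EuclideanSpace ℝ (Fin d))
    (hupd : ∀ t, θ (t + 1) = θ t - η • g t (θ t)) :
    ∀ θs : EuclideanSpace ℝ (Fin d),
      (1 / T : ℝ) * ∑ t ∈ Finset.range T, f t (θ t) ≤
        (1 / T : ℝ) * ∑ t ∈ Finset.range T, f t θs + ‖θs‖ ^ 2 / (2 * η * T) +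
        ‖θ 0‖ * ((1 / T : ℝ) * ∑ t ∈ Finset.range T, ‖g t (θ t)‖) +
        η * ((1 / T : ℝ) * ∑ t ∈ Finset.range T, ‖g t (θ t)‖ ^ 2) :=
  stmt_12_general T η hη f g hconv hgrad θ hupd
end

section
/- Let f₁, …, f_T : ℝ^d → ℝ be convex differentiable, η > 0, θ₁ ∈ ℝ^d, and θ_{t+1} = θ_t − η∇f_t(θ_t). Define R_t(θ) = ∑_{i=1}^t ⟨θ, ∇f_i(θ_i)⟩ + ‖θ‖²/(2η). Then for every θ* and every T ≥ 1: ∑_{t=1}^T ⟨θ_{t+1} − θ₁, ∇f_t(θ_t)⟩ ≤ R_T(θ*). -/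
open Finset
open scoped BigOperators RealInnerProductSpace

/-!
Writing `S t = ∑_{i<t} ∇f_i(θ_i)`, the iterates are `θ_t − θ₀ = −η S_t`, so the left-hand side is
`−η ∑_t ⟨S_{t+1}, S_{t+1} − S_t⟩`. Each summand is at least `(‖S_{t+1}‖² − ‖S_t‖²)/2`, and the
telescoped bound `−η ‖S_T‖²/2` is the minimum over `θ` of `R_T(θ) = ⟨θ, S_T⟩ + ‖θ‖²/(2η)`,
attained at `θ = −η S_T = θ_T − θ₀`.
-/

section InnerProductSpace

variable {E : Type*} [NormedAddCommGroup E] [InnerProductSpace ℝ E]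

theorem half_norm_sq_sub_le_inner_sub (x y : E) : (‖y‖ ^ 2 - ‖x‖ ^ 2) / 2 ≤ ⟪y, y - x⟫ := by
  rw [inner_sub_right, real_inner_self_eq_norm_sq]
  linarith [norm_sub_sq_real y x, sq_nonneg ‖y - x‖]

theorem half_norm_sq_sub_le_sum_inner_sub (s : ℕ → E) (T : ℕ) :
    (‖s T‖ ^ 2 - ‖s 0‖ ^ 2) / 2 ≤ ∑ t ∈ range T, ⟪s (t + 1), s (t + 1) - s t⟫ := by
  rw [← sum_range_sub (fun t => ‖s t‖ ^ 2), sum_div]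
  exact sum_le_sum fun t _ => half_norm_sq_sub_le_inner_sub (s t) (s (t + 1))

theorem neg_mul_half_norm_sq_le_inner_add {η : ℝ} (hη : 0 < η) (u v : E) :
    -η * (‖v‖ ^ 2 / 2) ≤ ⟪u, v⟫ + ‖u‖ ^ 2 / (2 * η) := by
  have hsq : ⟪u, v⟫ + ‖u‖ ^ 2 / (2 * η) - -η * (‖v‖ ^ 2 / 2) = ‖u + η • v‖ ^ 2 / (2 * η) := by
    rw [norm_add_sq_real, real_inner_smul_right, norm_smul, Real.norm_of_nonneg hη.le]
    field_simp
    ring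
  rw [← sub_nonneg, hsq]
  positivity

theorem sub_eq_neg_smul_sum_of_eq_sub_smul {θ v : ℕ → E} {η : ℝ}
    (h : ∀ t, θ (t + 1) = θ t - η • v t) (t : ℕ) :
    θ t - θ 0 = -η • ∑ i ∈ range t, v i := by
  rw [← sum_range_sub θ, smul_sum]
  refine sum_congr rfl fun i _ => ?_
  rw [h i, neg_smul]
  abel

end InnerProductSpace

theorem stmt_13_general {d : ℕ} (η : ℝ) (hη : 0 < η)
    (g : ℕ → EuclideanSpace ℝ (Fin d) → EuclideanSpace ℝ (Fin d))
    (θ : ℕ → EuclideanSpace ℝ (Fin d))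
    (hupd : ∀ t, θ (t + 1) = θ t - η • g t (θ t)) :
    ∀ (θs : EuclideanSpace ℝ (Fin d)) (T : ℕ), 1 ≤ T →
      ∑ t ∈ Finset.range T, ⟪θ (t + 1) - θ 0, g t (θ t)⟫ ≤
        (∑ t ∈ Finset.range T, ⟪θs, g t (θ t)⟫) + ‖θs‖ ^ 2 / (2 * η) := by
  intro θs T _
  set S : ℕ → EuclideanSpace ℝ (Fin d) := fun t => ∑ i ∈ range t, g i (θ i) with hS
  have hLHS : ∑ t ∈ range T, ⟪θ (t + 1) - θ 0, g t (θ t)⟫ =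
      -η * ∑ t ∈ range T, ⟪S (t + 1), S (t + 1) - S t⟫ := by
    rw [mul_sum]
    refine sum_congr rfl fun t _ => ?_
    rw [sub_eq_neg_smul_sum_of_eq_sub_smul hupd, real_inner_smul_left]
    simp [hS, sum_range_succ]
  have hRHS : ∑ t ∈ range T, ⟪θs, g t (θ t)⟫ = ⟪θs, S T⟫ := (inner_sum _ _ _).symm
  have htelescope : ‖S T‖ ^ 2 / 2 ≤ ∑ t ∈ range T, ⟪S (t + 1), S (t + 1) - S t⟫ := by
    simpa [hS] using half_norm_sq_sub_le_sum_inner_sub S T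
  calc ∑ t ∈ range T, ⟪θ (t + 1) - θ 0, g t (θ t)⟫
      ≤ -η * (‖S T‖ ^ 2 / 2) := by
        rw [hLHS]
        exact mul_le_mul_of_nonpos_left htelescope (by linarith)
    _ ≤ ⟪θs, S T⟫ + ‖θs‖ ^ 2 / (2 * η) := neg_mul_half_norm_sq_le_inner_add hη θs (S T)
    _ = _ := by rw [hRHS]

/-- The "be-the-leader" lemma for online gradient descent: with
`R_T(θ) = ∑_{t<T} ⟨θ, ∇f_t(θ_t)⟩ + ‖θ‖²/(2η)`, for every `θ*` and `T ≥ 1`,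
`∑_{t<T} ⟨θ_{t+1} − θ₀, ∇f_t(θ_t)⟩ ≤ R_T(θ*)`. -/
theorem stmt_13 {d : ℕ} (η : ℝ) (hη : 0 < η)
    (f : ℕ → EuclideanSpace ℝ (Fin d) → ℝ)
    (g : ℕ → EuclideanSpace ℝ (Fin d) → EuclideanSpace ℝ (Fin d))
    (hconv : ∀ t, ConvexOn ℝ Set.univ (f t))
    (hgrad : ∀ t θ', HasGradientAt (f t) (g t θ') θ')
    (θ : ℕ → EuclideanSpace ℝ (Fin d))
    (hupd : ∀ t, θ (t + 1) = θ t - η • g t (θ t)) :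
    ∀ (θs : EuclideanSpace ℝ (Fin d)) (T : ℕ), 1 ≤ T →
      ∑ t ∈ Finset.range T, ⟪θ (t + 1) - θ 0, g t (θ t)⟫ ≤
        (∑ t ∈ Finset.range T, ⟪θs, g t (θ t)⟫) + ‖θs‖ ^ 2 / (2 * η) :=
  stmt_13_general η hη g θ hupd
end
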